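/- arXiv:2307.14181 — 4 statements merged into one kernel-verified Lean document; each statement's English description precedes it below -/
import Mathlib

section
/- Given sequences (x^k) ⊂ X and (y^k) ⊂ Y, where X, Y are compact, y^k is the δ-oracle output at x^k (i.e., φ(x^k) - G(x^k,y^k) ≤ δ|φ(x^k)|), and G(x^k, y^ℓ) ≤ 0 for all ℓ < k, then the feasibility error φ(x^k)⁺ converges to 0 as k → ∞. -/
/-- Given sequences `x^k ⊂ X`, `y^k ⊂ Y` with `y^k` the δ-oracle output at `x^k`
and `G(x^k, y^ℓ) ≤ 0` for all `ℓ < k`, the feasibility error `φ(x^k)⁺ → 0`. -/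
theorem feasibility_error_vanishes {m n : ℕ}
    (δ : ℝ) (hδ0 : 0 ≤ δ) (hδ1 : δ < 1)
    (G : EuclideanSpace ℝ (Fin m) × EuclideanSpace ℝ (Fin n) → ℝ)
    (hG : Continuous G)
    (X : Set (EuclideanSpace ℝ (Fin m))) (hXne : X.Nonempty) (hXc : IsCompact X)
    (Y : Set (EuclideanSpace ℝ (Fin n))) (hYne : Y.Nonempty) (hYc : IsCompact Y)
    (φ : EuclideanSpace ℝ (Fin m) → ℝ)
    (hφ : ∀ x, IsGreatest {v : ℝ | ∃ y ∈ Y, v = G (x, y)} (φ x))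
    (x : ℕ → EuclideanSpace ℝ (Fin m)) (hx : ∀ k, x k ∈ X)
    (y : ℕ → EuclideanSpace ℝ (Fin n)) (hy : ∀ k, y k ∈ Y)
    (horacle : ∀ k, φ (x k) - G (x k, y k) ≤ δ * |φ (x k)|)
    (hfeas : ∀ k ℓ, ℓ < k → G (x k, y ℓ) ≤ 0) :
    Filter.Tendsto (fun k => max (φ (x k)) 0) Filter.atTop (nhds 0) := by
  by_contra hcon
  rw [Metric.tendsto_atTop] at hcon
  push_neg at hcon
  obtain ⟨ε, hε, hfreq⟩ := hcon
  -- extract subsequence s with max (φ (x (s k))) 0 ≥ ε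
  have hfr : ∃ᶠ k in Filter.atTop, ε ≤ max (φ (x k)) 0 := by
    rw [Filter.frequently_atTop]
    intro N
    obtain ⟨k, hk, hdist⟩ := hfreq N
    refine ⟨k, hk, ?_⟩
    rw [Real.dist_eq, sub_zero, abs_of_nonneg (le_max_right _ _)] at hdist
    exact hdist
  obtain ⟨s, hs, hsP⟩ := Filter.extraction_of_frequently_atTop hfr
  -- φ (x (s k)) ≥ ε
  have hφge : ∀ k, ε ≤ φ (x (s k)) := by
    intro k
    rcases le_or_gt ε (φ (x (s k))) with h | h
    · exact h
    · exfalso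
      have := hsP k
      have : ε ≤ φ (x (s k)) ∨ ε ≤ (0 : ℝ) := le_max_iff.mp this
      rcases this with h' | h'
      · exact absurd h' (not_le.mpr h)
      · exact absurd h' (not_le.mpr hε)
  -- G (x (s k), y (s k)) ≥ (1-δ) ε
  have hGge : ∀ k, (1 - δ) * ε ≤ G (x (s k), y (s k)) := by
    intro k
    have h1 := horacle (s k)
    have hpos : 0 ≤ φ (x (s k)) := le_trans hε.le (hφge k)
    rw [abs_of_nonneg hpos] at h1
    have : (1 - δ) * φ (x (s k)) ≤ G (x (s k), y (s k)) := by nlinarith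
    have h2 : (1 - δ) * ε ≤ (1 - δ) * φ (x (s k)) := by nlinarith [hφge k]
    linarith
  -- compactness: convergent subsequence of (x (s k), y (s k))
  obtain ⟨⟨a, b⟩, hab, σ, hσ, hconv⟩ :=
    (hXc.prod hYc).tendsto_subseq (x := fun k => (x (s k), y (s k)))
      (fun k => ⟨hx (s k), hy (s k)⟩)
  have hxa : Filter.Tendsto (fun k => x (s (σ k))) Filter.atTop (nhds a) :=
    (continuous_fst.tendsto _).comp hconv
  have hyb : Filter.Tendsto (fun k => y (s (σ k))) Filter.atTop (nhds b) :=
    (continuous_snd.tendsto _).comp hconv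
  -- limit of diagonal: G(a,b) ≥ (1-δ)ε
  have hGd : Filter.Tendsto (fun k => G (x (s (σ k)), y (s (σ k)))) Filter.atTop
      (nhds (G (a, b))) := (hG.tendsto _).comp hconv
  have hab1 : (1 - δ) * ε ≤ G (a, b) :=
    le_of_tendsto_of_tendsto' tendsto_const_nhds hGd (fun k => hGge (σ k))
  -- limit of off-diagonal: G(a,b) ≤ 0
  have hxa' : Filter.Tendsto (fun k => x (s (σ (k + 1)))) Filter.atTop (nhds a) :=
    hxa.comp (Filter.tendsto_add_atTop_nat 1)
  have hGo : Filter.Tendsto (fun k => G (x (s (σ (k + 1))), y (s (σ k)))) Filter.atTop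
      (nhds (G (a, b))) := (hG.tendsto _).comp (hxa'.prodMk_nhds hyb)
  have hab2 : G (a, b) ≤ 0 := by
    refine le_of_tendsto_of_tendsto' hGo tendsto_const_nhds (fun k => ?_)
    exact hfeas _ _ ((hs.comp hσ).lt_iff_lt.mpr (Nat.lt_succ_self k))
  nlinarith
end

section
/- Under the Slater condition, the dual problem sup_{z ∈ cone(M)} θ(z) attains its supremum: there exists z* ∈ cone(M) with θ(z*) = sup_{z ∈ cone(M)} θ(z). -/
/-!
The dual function `θ` is a minimum of continuous functions over a compact set, hence continuous.
A Slater point `x` gives `⟪x, w⟫ ≤ -δ < 0` on `conv M`, so `θ (t • w) ≤ F x - t δ` decays linearly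
along every ray of the cone. Hence `θ` can exceed `θ 0` only on the truncated cone
`[0, T] • conv M` with `T = (F x - θ 0) / δ`, which is compact because, by Carathéodory, the convex
hull of a compact set in finite dimension is compact; a maximiser of `θ` there is a global one.
-/

open scoped RealInnerProductSpace

/-- The convex conic hull of a set `M`: all nonnegative multiples of points of `conv(M)`. -/
def coneHull {E : Type*} [AddCommGroup E] [Module ℝ E] (M : Set E) : Set E :=
  {z | ∃ t : ℝ, 0 ≤ t ∧ ∃ w ∈ convexHull ℝ M, z = t • w}

open Module Set

section ConvexHullCompact

variable {E : Type*} [AddCommGroup E] [Module ℝ E] {s : Set E}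

def convexCombinations (s : Set E) (k : ℕ) : Set E :=
  (fun p : (Fin k → ℝ) × (Fin k → E) => ∑ i, p.1 i • p.2 i) ''
    (stdSimplex ℝ (Fin k) ×ˢ univ.pi fun _ => s)

lemma isCompact_convexCombinations [TopologicalSpace E] [ContinuousAdd E] [ContinuousSMul ℝ E]
    (hs : IsCompact s) (k : ℕ) : IsCompact (convexCombinations s k) :=
  (IsCompact.prod (isCompact_stdSimplex ℝ (Fin k)) (isCompact_univ_pi fun _ => hs)).image
    (by fun_prop)

lemma convexCombinations_subset_convexHull (k : ℕ) : convexCombinations s k ⊆ convexHull ℝ s := by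
  rintro _ ⟨⟨w, z⟩, ⟨hw, hz⟩, rfl⟩
  exact (convex_convexHull ℝ s).sum_mem (fun i _ => hw.1 i) hw.2
    fun i _ => subset_convexHull ℝ s (hz i (mem_univ i))

lemma convexHull_subset_iUnion_convexCombinations [FiniteDimensional ℝ E] :
    convexHull ℝ s ⊆ ⋃ k ∈ Finset.range (finrank ℝ E + 2), convexCombinations s k := by
  intro x hx
  obtain ⟨ι, _, z, w, hzs, hz, hw, hw_sum, rfl⟩ := eq_pos_convex_span_of_mem_convexHull hx
  have hcard : Fintype.card ι < finrank ℝ E + 2 := by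
    have := hz.card_le_finrank_succ
    have := Submodule.finrank_le (vectorSpan ℝ (range z))
    omega
  let e := Fintype.equivFin ι
  refine mem_biUnion (Finset.mem_range.2 hcard)
    ⟨(w ∘ e.symm, z ∘ e.symm), ⟨⟨fun i => (hw _).le, ?_⟩, fun i _ => hzs (mem_range_self _)⟩, ?_⟩
  · simpa only [Function.comp_apply, e.symm.sum_comp] using hw_sum
  · simp only [Function.comp_apply]
    exact e.symm.sum_comp fun i => w i • z i

theorem isCompact_convexHull [TopologicalSpace E] [ContinuousAdd E] [ContinuousSMul ℝ E]
    [FiniteDimensional ℝ E] (hs : IsCompact s) :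
    IsCompact (convexHull ℝ s) := by
  have hunion : convexHull ℝ s = ⋃ k ∈ Finset.range (finrank ℝ E + 2), convexCombinations s k :=
    convexHull_subset_iUnion_convexCombinations.antisymm
      (iUnion₂_subset fun k _ => convexCombinations_subset_convexHull k)
  rw [hunion]
  exact (Finset.range _).isCompact_biUnion fun k _ => isCompact_convexCombinations hs k

end ConvexHullCompact

section LagrangeDual

variable {E : Type*} [NormedAddCommGroup E] [InnerProductSpace ℝ E] {X M : Set E} {F θ : E → ℝ}

lemma continuous_of_isLeast_add_inner (hX : IsCompact X) (hF : Continuous F)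
    (hθ : ∀ z, IsLeast {v | ∃ x ∈ X, v = F x + ⟪x, z⟫} (θ z)) : Continuous θ := by
  have hθ_eq : θ = fun z => sInf ((fun x => F x + ⟪x, z⟫) '' X) := by
    funext z
    rw [← (hθ z).csInf_eq]
    congr 1
    ext v
    simp only [mem_image, mem_ofPred_eq, eq_comm]
  rw [hθ_eq]
  exact hX.continuous_sInf (by fun_prop)

lemma le_sub_mul_of_inner_le_neg (hθ : ∀ z, IsLeast {v | ∃ x ∈ X, v = F x + ⟪x, z⟫} (θ z))
    {x w : E} {t δ : ℝ} (hx : x ∈ X) (hxw : ⟪x, w⟫ ≤ -δ) (ht : 0 ≤ t) :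
    θ (t • w) ≤ F x - t * δ :=
  calc θ (t • w) ≤ F x + ⟪x, t • w⟫ := (hθ _).2 ⟨x, hx, rfl⟩
    _ = F x + t * ⟪x, w⟫ := by rw [real_inner_smul_right]
    _ ≤ F x + t * -δ := by gcongr
    _ = F x - t * δ := by ring

lemma exists_pos_forall_mem_convexHull_inner_le_neg (hM : IsCompact M) (hMne : M.Nonempty)
    {x : E} (hx : ∀ z ∈ M, ⟪x, z⟫ < 0) : ∃ δ > 0, ∀ w ∈ convexHull ℝ M, ⟪x, w⟫ ≤ -δ := by
  obtain ⟨w₀, hw₀, hmax⟩ := hM.exists_isMaxOn hMne (by fun_prop : Continuous (⟪x, ·⟫)).continuousOn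
  refine ⟨-⟪x, w₀⟫, neg_pos.2 (hx w₀ hw₀), fun w hw => ?_⟩
  rw [neg_neg]
  exact convexHull_min (fun z hz => hmax hz) (convex_halfSpace_le (innerₛₗ ℝ x).isLinear _) hw

theorem exists_isGreatest_image_coneHull [FiniteDimensional ℝ E] (hX : IsCompact X)
    (hF : Continuous F) (hθ : ∀ z, IsLeast {v | ∃ x ∈ X, v = F x + ⟪x, z⟫} (θ z))
    (hM : IsCompact M) (hMne : M.Nonempty) (hslater : ∃ x ∈ X, ∀ z ∈ M, ⟪x, z⟫ < 0) :
    ∃ z ∈ coneHull M, IsGreatest (θ '' coneHull M) (θ z) := by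
  obtain ⟨x, hxX, hx⟩ := hslater
  obtain ⟨δ, hδ, hxδ⟩ := exists_pos_forall_mem_convexHull_inner_le_neg hM hMne hx
  set T := (F x - θ 0) / δ
  have hθ0 : θ 0 ≤ F x := by simpa using (hθ 0).2 ⟨x, hxX, rfl⟩
  have hT : 0 ≤ T := div_nonneg (sub_nonneg.2 hθ0) hδ.le
  set K := (fun p : ℝ × E => p.1 • p.2) '' (Icc 0 T ×ˢ convexHull ℝ M)
  have hK : IsCompact K := (isCompact_Icc.prod (isCompact_convexHull hM)).image (by fun_prop)
  have hK_cone : K ⊆ coneHull M := by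
    rintro _ ⟨⟨t, w⟩, ⟨⟨ht, -⟩, hw⟩, rfl⟩
    exact ⟨t, ht, w, hw, rfl⟩
  obtain ⟨w₀, hw₀⟩ := hMne.mono (subset_convexHull ℝ M)
  have h0K : (0 : E) ∈ K := ⟨(0, w₀), ⟨⟨le_rfl, hT⟩, hw₀⟩, zero_smul _ _⟩
  obtain ⟨z, hzK, hzmax⟩ :=
    hK.exists_isMaxOn ⟨0, h0K⟩ (continuous_of_isLeast_add_inner hX hF hθ).continuousOn
  refine ⟨z, hK_cone hzK, mem_image_of_mem θ (hK_cone hzK), ?_⟩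
  rintro _ ⟨_, ⟨t, ht, w, hw, rfl⟩, rfl⟩
  by_cases htT : t ≤ T
  · exact hzmax ⟨(t, w), ⟨⟨ht, htT⟩, hw⟩, rfl⟩
  · calc θ (t • w) ≤ F x - t * δ := le_sub_mul_of_inner_le_neg hθ hxX (hxδ w hw) ht
      _ ≤ F x - T * δ := by gcongr; exact (not_le.1 htT).le
      _ = θ 0 := by rw [div_mul_cancel₀ _ hδ.ne']; ring
      _ ≤ θ z := hzmax h0K

end LagrangeDual

theorem dual_attains_supremum_general {m n : ℕ}
    (X : Set (EuclideanSpace ℝ (Fin m)))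
    (hXc : IsCompact X)
    (F : EuclideanSpace ℝ (Fin m) → ℝ) (hFc : Continuous F)
    (Y : Set (EuclideanSpace ℝ (Fin n))) (hYne : Y.Nonempty) (hYc : IsCompact Y)
    (a : EuclideanSpace ℝ (Fin n) → EuclideanSpace ℝ (Fin m)) (ha : Continuous a)
    (M : Set (EuclideanSpace ℝ (Fin m))) (hM : M = a '' Y)
    (θ : EuclideanSpace ℝ (Fin m) → ℝ)
    (hθ : ∀ z, IsLeast {v : ℝ | ∃ x ∈ X, v = F x + ⟪x, z⟫} (θ z))
    (hslater : ∃ xh ∈ X, ∀ z ∈ M, ⟪xh, z⟫ < 0) :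
    ∃ zstar ∈ coneHull M, IsGreatest (θ '' coneHull M) (θ zstar) := by
  subst hM
  exact exists_isGreatest_image_coneHull hXc hFc hθ (hYc.image ha) (hYne.image a) hslater

/-- Under the Slater condition and absence of duality gap, the dual problem
`sup_{z ∈ cone(M)} θ(z)` attains its supremum. -/
theorem dual_attains_supremum {m n : ℕ}
    (X : Set (EuclideanSpace ℝ (Fin m)))
    (hXne : X.Nonempty) (hXc : IsCompact X) (hXconv : Convex ℝ X)
    (F : EuclideanSpace ℝ (Fin m) → ℝ) (hFc : Continuous F)
    (hFconv : ConvexOn ℝ Set.univ F)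
    (Y : Set (EuclideanSpace ℝ (Fin n))) (hYne : Y.Nonempty) (hYc : IsCompact Y)
    (a : EuclideanSpace ℝ (Fin n) → EuclideanSpace ℝ (Fin m)) (ha : Continuous a)
    (M : Set (EuclideanSpace ℝ (Fin m))) (hM : M = a '' Y)
    (θ : EuclideanSpace ℝ (Fin m) → ℝ)
    (hθ : ∀ z, IsLeast {v : ℝ | ∃ x ∈ X, v = F x + ⟪x, z⟫} (θ z))
    (hslater : ∃ xh ∈ X, ∀ z ∈ M, ⟪xh, z⟫ < 0)
    (V : ℝ)
    (hVdual : IsLUB (θ '' coneHull M) V)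
    (hVprimal : IsLeast {v : ℝ | ∃ x ∈ X, (∀ z ∈ M, ⟪x, z⟫ ≤ 0) ∧ v = F x} V) :
    ∃ zstar ∈ coneHull M, IsGreatest (θ '' coneHull M) (θ zstar) :=
  dual_attains_supremum_general X hXc F hFc Y hYne hYc a ha M hM θ hθ hslater
end

section
/- If Q(x), Q¹, …, Qʳ are all positive semidefinite, then the Shor SDP relaxation is exact: val(SDP_x) = val(P_x). -/
open scoped Matrix
/-- The symmetric bordered matrix `[[Q, q], [qᵀ, 2b]]`. -/
def borderMat {n : ℕ} (Q : Matrix (Fin n) (Fin n) ℝ) (q : Fin n → ℝ) (b : ℝ) :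
    Matrix (Fin n ⊕ Unit) (Fin n ⊕ Unit) ℝ :=
  Matrix.fromBlocks Q (Matrix.of fun i _ => q i) (Matrix.of fun _ j => q j)
    (Matrix.of fun _ _ => 2 * b)

/-- `𝒬(x) = ½[[−Q(x), q(x)], [q(x)ᵀ, 2b(x)]]`. -/
noncomputable def objMat {n : ℕ} (Q : Matrix (Fin n) (Fin n) ℝ) (q : Fin n → ℝ) (b : ℝ) :
    Matrix (Fin n ⊕ Unit) (Fin n ⊕ Unit) ℝ :=
  (1 / 2 : ℝ) • borderMat (-Q) q b

/-- `𝒬ʲ = ½[[Qʲ, qʲ], [(qʲ)ᵀ, 2bⱼ]]`. -/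
noncomputable def conMat {n : ℕ} (Q : Matrix (Fin n) (Fin n) ℝ) (q : Fin n → ℝ) (b : ℝ) :
    Matrix (Fin n ⊕ Unit) (Fin n ⊕ Unit) ℝ :=
  (1 / 2 : ℝ) • borderMat Q q b

/-- Frobenius inner product `⟨A, B⟩ = Tr(AB)` of symmetric matrices. -/
noncomputable def frob {n : ℕ} (A B : Matrix (Fin n ⊕ Unit) (Fin n ⊕ Unit) ℝ) : ℝ :=
  (A * B).trace

/-!
A feasible point `y` of `P_x` lifts to the rank-one matrix `Y = (y, 1)(y, 1)ᵀ`, which is feasible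
for `SDP_x` with the same value, so `val(P_x) ≤ val(SDP_x)`. Conversely, let `Y` be feasible for
`SDP_x`, let `y` be its last column and `M = Y₁₁ - y yᵀ` the Schur complement of the corner entry
`1`, which is positive semidefinite. Then
`⟨½[[A, a], [aᵀ, 2c]], Y⟩ = ½ yᵀAy + aᵀy + c + ½ tr(AM)`, and `tr(AM) ≥ 0` whenever `A ⪰ 0`.
Applied to the `Qʲ ⪰ 0` this shows that `y` is feasible for `P_x`, and applied to `-Q(x) ⪯ 0` that
its value is at least `⟨𝒬(x), Y⟩`; hence `val(SDP_x) ≤ val(P_x)`.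
-/

open Matrix

open scoped ComplexOrder in
theorem Matrix.PosSemidef.trace_mul_nonneg {m 𝕜 : Type*} [Fintype m] [DecidableEq m] [RCLike 𝕜]
    {A B : Matrix m m 𝕜} (hA : A.PosSemidef) (hB : B.PosSemidef) :
    0 ≤ (A * B).trace := by
  open scoped MatrixOrder in
  obtain ⟨C, rfl⟩ := CStarAlgebra.nonneg_iff_eq_star_mul_self.mp hB.nonneg
  rw [star_eq_conjTranspose, ← Matrix.mul_assoc, trace_mul_comm, ← Matrix.mul_assoc]
  exact (hA.mul_mul_conjTranspose_same C).trace_nonneg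

section Border

variable {m : Type*}

def borderCol (Y : Matrix (m ⊕ Unit) (m ⊕ Unit) ℝ) : m → ℝ :=
  fun i => Y (.inl i) (.inr ())

def schurCompl (Y : Matrix (m ⊕ Unit) (m ⊕ Unit) ℝ) : Matrix m m ℝ :=
  Y.toBlocks₁₁ - vecMulVec (borderCol Y) (borderCol Y)

theorem posSemidef_schurCompl [Fintype m] {Y : Matrix (m ⊕ Unit) (m ⊕ Unit) ℝ} (hY : Y.PosSemidef)
    (h1 : Y (.inr ()) (.inr ()) = 1) : (schurCompl Y).PosSemidef := by
  have hblocks : Y = fromBlocks Y.toBlocks₁₁ Y.toBlocks₁₂ Y.toBlocks₁₂ᴴ 1 := by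
    ext (i | ⟨⟩) (j | ⟨⟩)
    · rfl
    · rfl
    · simpa [toBlocks₁₂] using (hY.isHermitian.apply (.inr _) (.inl j)).symm
    · exact h1
  let : Invertible (1 : Matrix Unit Unit ℝ) := invertibleOne
  rw [hblocks, PosDef.fromBlocks₂₂ _ _ PosDef.one, inv_one, Matrix.mul_one] at hY
  have hcol : Y.toBlocks₁₂ * Y.toBlocks₁₂ᴴ = vecMulVec (borderCol Y) (borderCol Y) := by
    ext i j
    simp [vecMulVec_apply, mul_apply, toBlocks₁₂, borderCol]
  rwa [hcol] at hY

def liftMat (y : m → ℝ) : Matrix (m ⊕ Unit) (m ⊕ Unit) ℝ :=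
  vecMulVec (Sum.elim y 1) (Sum.elim y 1)

theorem posSemidef_liftMat [Fintype m] [DecidableEq m] (y : m → ℝ) : (liftMat y).PosSemidef :=
  posSemidef_vecMulVec_self_star (Sum.elim y 1)

theorem liftMat_inr_inr (y : m → ℝ) : liftMat y (.inr ()) (.inr ()) = 1 := by
  simp [liftMat, vecMulVec_apply]

theorem borderCol_liftMat (y : m → ℝ) : borderCol (liftMat y) = y := by
  ext i
  simp [borderCol, liftMat, vecMulVec_apply]

theorem schurCompl_liftMat (y : m → ℝ) : schurCompl (liftMat y) = 0 := by
  rw [schurCompl, borderCol_liftMat, sub_eq_zero]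
  ext i j
  simp [liftMat, vecMulVec_apply, toBlocks₁₁]

theorem trace_liftMat [Fintype m] (y : m → ℝ) : (liftMat y).trace = y ⬝ᵥ y + 1 := by
  simp [liftMat, trace_vecMulVec, dotProduct, Fintype.sum_sum_type]

end Border

section Frobenius

variable {n : ℕ}

theorem frob_half_borderMat (Q : Matrix (Fin n) (Fin n) ℝ) (q : Fin n → ℝ) (b : ℝ)
    {Y : Matrix (Fin n ⊕ Unit) (Fin n ⊕ Unit) ℝ} (hY : Y.IsHermitian)
    (h1 : Y (.inr ()) (.inr ()) = 1) :
    frob ((1 / 2 : ℝ) • borderMat Q q b) Y =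
      1 / 2 * (borderCol Y ⬝ᵥ Q *ᵥ borderCol Y) + q ⬝ᵥ borderCol Y + b
        + 1 / 2 * (Q * schurCompl Y).trace := by
  have hsymm : ∀ i, Y (.inr ()) (.inl i) = Y (.inl i) (.inr ()) := fun i => by
    simpa using (hY.apply (.inr ()) (.inl i)).symm
  rw [frob, Matrix.smul_mul, trace_smul, smul_eq_mul]
  simp only [trace, diag, mul_apply, borderMat, Fintype.sum_sum_type, Finset.univ_unique,
    Finset.sum_singleton, fromBlocks_apply₁₁, fromBlocks_apply₁₂, fromBlocks_apply₂₁,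
    fromBlocks_apply₂₂, of_apply, schurCompl, Matrix.sub_apply, toBlocks₁₁, vecMulVec_apply,
    dotProduct, mulVec, borderCol, PUnit.default_eq_unit, hsymm, h1, mul_sub,
    Finset.sum_sub_distrib, Finset.sum_add_distrib, Finset.mul_sum, mul_comm, mul_left_comm]
  simp only [mul_left_comm _ (1 / 2 : ℝ), ← Finset.mul_sum]
  ring

theorem frob_half_borderMat_liftMat (Q : Matrix (Fin n) (Fin n) ℝ) (q : Fin n → ℝ) (b : ℝ)
    (y : Fin n → ℝ) :
    frob ((1 / 2 : ℝ) • borderMat Q q b) (liftMat y) = 1 / 2 * (y ⬝ᵥ Q *ᵥ y) + q ⬝ᵥ y + b := by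
  rw [frob_half_borderMat Q q b (posSemidef_liftMat y).isHermitian (liftMat_inr_inr y),
    borderCol_liftMat, schurCompl_liftMat, Matrix.mul_zero, trace_zero, mul_zero, add_zero]

theorem frob_conMat_liftMat (Q : Matrix (Fin n) (Fin n) ℝ) (q : Fin n → ℝ) (b : ℝ)
    (y : Fin n → ℝ) :
    frob (conMat Q q b) (liftMat y) = 1 / 2 * (y ⬝ᵥ Q *ᵥ y) + q ⬝ᵥ y + b :=
  frob_half_borderMat_liftMat Q q b y

theorem frob_objMat_liftMat (Q : Matrix (Fin n) (Fin n) ℝ) (q : Fin n → ℝ) (b : ℝ)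
    (y : Fin n → ℝ) :
    frob (objMat Q q b) (liftMat y) = -(1 / 2) * (y ⬝ᵥ Q *ᵥ y) + q ⬝ᵥ y + b := by
  rw [objMat, frob_half_borderMat_liftMat, neg_mulVec, dotProduct_neg]
  ring

theorem le_frob_conMat {Q : Matrix (Fin n) (Fin n) ℝ} (hQ : Q.PosSemidef) (q : Fin n → ℝ) (b : ℝ)
    {Y : Matrix (Fin n ⊕ Unit) (Fin n ⊕ Unit) ℝ} (hY : Y.PosSemidef)
    (h1 : Y (.inr ()) (.inr ()) = 1) :
    1 / 2 * (borderCol Y ⬝ᵥ Q *ᵥ borderCol Y) + q ⬝ᵥ borderCol Y + b ≤ frob (conMat Q q b) Y := by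
  rw [conMat, frob_half_borderMat Q q b hY.isHermitian h1]
  have := hQ.trace_mul_nonneg (posSemidef_schurCompl hY h1)
  linarith

theorem frob_objMat_le {Q : Matrix (Fin n) (Fin n) ℝ} (hQ : Q.PosSemidef) (q : Fin n → ℝ) (b : ℝ)
    {Y : Matrix (Fin n ⊕ Unit) (Fin n ⊕ Unit) ℝ} (hY : Y.PosSemidef)
    (h1 : Y (.inr ()) (.inr ()) = 1) :
    frob (objMat Q q b) Y ≤
      -(1 / 2) * (borderCol Y ⬝ᵥ Q *ᵥ borderCol Y) + q ⬝ᵥ borderCol Y + b := by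
  rw [objMat, frob_half_borderMat (-Q) q b hY.isHermitian h1, neg_mulVec, dotProduct_neg,
    Matrix.neg_mul, trace_neg]
  have := hQ.trace_mul_nonneg (posSemidef_schurCompl hY h1)
  linarith

end Frobenius

theorem shor_sdp_exact_general {n r : ℕ}
    (Qx : Matrix (Fin n) (Fin n) ℝ) (hQxpsd : Qx.PosSemidef) (qx : Fin n → ℝ) (bx : ℝ)
    (Qc : Fin r → Matrix (Fin n) (Fin n) ℝ)
    (hQcpsd : ∀ j, (Qc j).PosSemidef)
    (qc : Fin r → Fin n → ℝ) (bc : Fin r → ℝ)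
    (ρ : ℝ)
    (hball : ∀ y : Fin n → ℝ,
      (∀ j, (1 / 2) * (y ⬝ᵥ Qc j *ᵥ y) + qc j ⬝ᵥ y + bc j ≤ 0) → y ⬝ᵥ y ≤ ρ ^ 2)
    (vP vS : ℝ)
    (hP : IsLUB {v : ℝ | ∃ y : Fin n → ℝ,
      (∀ j, (1 / 2) * (y ⬝ᵥ Qc j *ᵥ y) + qc j ⬝ᵥ y + bc j ≤ 0) ∧
      v = -(1 / 2) * (y ⬝ᵥ Qx *ᵥ y) + qx ⬝ᵥ y + bx} vP)
    (hS : IsLUB {v : ℝ | ∃ Y : Matrix (Fin n ⊕ Unit) (Fin n ⊕ Unit) ℝ,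
      Y.PosSemidef ∧
      (∀ j, frob (conMat (Qc j) (qc j) (bc j)) Y ≤ 0) ∧
      Y.trace ≤ 1 + ρ ^ 2 ∧
      Y (Sum.inr ()) (Sum.inr ()) = 1 ∧
      v = frob (objMat Qx qx bx) Y} vS) :
    vP = vS := by
  apply le_antisymm
  · refine hP.2 ?_
    rintro v ⟨y, hy, rfl⟩
    refine hS.1 ⟨liftMat y, posSemidef_liftMat y, fun j => ?_, ?_, liftMat_inr_inr y,
      (frob_objMat_liftMat Qx qx bx y).symm⟩
    · rw [frob_conMat_liftMat]
      exact hy j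
    · rw [trace_liftMat]
      linarith [hball y hy]
  · refine hS.2 ?_
    rintro v ⟨Y, hY, hcon, -, h1, rfl⟩
    have hfeas : ∀ j,
        1 / 2 * (borderCol Y ⬝ᵥ Qc j *ᵥ borderCol Y) + qc j ⬝ᵥ borderCol Y + bc j ≤ 0 :=
      fun j => (le_frob_conMat (hQcpsd j) (qc j) (bc j) hY h1).trans (hcon j)
    exact (frob_objMat_le hQxpsd qx bx hY h1).trans (hP.1 ⟨borderCol Y, hfeas, rfl⟩)

/-- If `Q(x), Q¹, …, Qʳ` are all PSD, the Shor SDP relaxation is exact: `val(SDP_x) = val(P_x)`. -/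
theorem shor_sdp_exact {n r : ℕ}
    (Qx : Matrix (Fin n) (Fin n) ℝ) (hQx : Qx.IsSymm) (hQxpsd : Qx.PosSemidef) (qx : Fin n → ℝ) (bx : ℝ)
    (Qc : Fin r → Matrix (Fin n) (Fin n) ℝ) (hQc : ∀ j, (Qc j).IsSymm)
    (hQcpsd : ∀ j, (Qc j).PosSemidef)
    (qc : Fin r → Fin n → ℝ) (bc : Fin r → ℝ)
    (ρ : ℝ) (hρ : 0 ≤ ρ)
    (hball : ∀ y : Fin n → ℝ,
      (∀ j, (1 / 2) * (y ⬝ᵥ Qc j *ᵥ y) + qc j ⬝ᵥ y + bc j ≤ 0) → y ⬝ᵥ y ≤ ρ ^ 2)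
    (hYne : ∃ y : Fin n → ℝ, ∀ j, (1 / 2) * (y ⬝ᵥ Qc j *ᵥ y) + qc j ⬝ᵥ y + bc j ≤ 0)
    (vP vS : ℝ)
    (hP : IsLUB {v : ℝ | ∃ y : Fin n → ℝ,
      (∀ j, (1 / 2) * (y ⬝ᵥ Qc j *ᵥ y) + qc j ⬝ᵥ y + bc j ≤ 0) ∧
      v = -(1 / 2) * (y ⬝ᵥ Qx *ᵥ y) + qx ⬝ᵥ y + bx} vP)
    (hS : IsLUB {v : ℝ | ∃ Y : Matrix (Fin n ⊕ Unit) (Fin n ⊕ Unit) ℝ,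
      Y.PosSemidef ∧
      (∀ j, frob (conMat (Qc j) (qc j) (bc j)) Y ≤ 0) ∧
      Y.trace ≤ 1 + ρ ^ 2 ∧
      Y (Sum.inr ()) (Sum.inr ()) = 1 ∧
      v = frob (objMat Qx qx bx) Y} vS) :
    vP = vS :=
  shor_sdp_exact_general Qx hQxpsd qx bx Qc hQcpsd qc bc ρ hball vP vS hP hS
end

section
/- The finite SDP-based formulation SIPR (min F(x) over x ∈ X, λ ∈ ℝ^r₊, α ≥ 0, β ∈ ℝ with α(1+ρ²)+β ≤ 0 and Σⱼλⱼ𝒬ʲ + αI + βE − 𝒬(x) ⪰ 0) is a restriction of the SIP problem: any x that is part of a feasible point of SIPR satisfies G(x,y) ≤ 0 for all y ∈ Y. -/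
open scoped Matrix

/-- `E = diag(0, …, 0, 1)`. -/
def EMat (n : ℕ) : Matrix (Fin n ⊕ Unit) (Fin n ⊕ Unit) ℝ :=
  Matrix.fromBlocks 0 0 0 1

/-!
Evaluate the quadratic form of the positive semidefinite SIPR matrix at the homogenized point
`z = (y, 1)`. Each bordered matrix turns into its quadratic function of `y`: `zᵀ𝒬ʲz` is the `j`-th
constraint of `Y`, `zᵀ𝒬(x)z = G(x, y)`, `zᵀz = ‖y‖² + 1` and `zᵀEz = 1`. For `y ∈ Y`,
`λ ≥ 0` and `Y ⊂ B(0, ρ)` then give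
`0 ≤ ∑ⱼ λⱼ gⱼ(y) + α(‖y‖² + 1) + β - G(x, y) ≤ α(1 + ρ²) + β - G(x, y) ≤ -G(x, y)`.
-/

open Matrix

section Homogenization

variable {n : ℕ} (y : Fin n → ℝ)

theorem borderMat_quadForm_homogenize (Q : Matrix (Fin n) (Fin n) ℝ) (q : Fin n → ℝ) (b : ℝ) :
    Sum.elim y 1 ⬝ᵥ borderMat Q q b *ᵥ Sum.elim y 1 = y ⬝ᵥ Q *ᵥ y + 2 * (q ⬝ᵥ y) + 2 * b := by
  simp only [borderMat, fromBlocks_mulVec, sumElim_dotProduct_sumElim, Sum.elim_comp_inl,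
    Sum.elim_comp_inr, dotProduct_add]
  simp only [dotProduct, mulVec, mul_comm, Finset.univ_unique, PUnit.default_eq_unit, of_apply,
    Pi.one_apply, mul_one, Finset.sum_const, Finset.card_singleton, one_smul, one_mul]
  ring

theorem conMat_quadForm_homogenize (Q : Matrix (Fin n) (Fin n) ℝ) (q : Fin n → ℝ) (b : ℝ) :
    Sum.elim y 1 ⬝ᵥ conMat Q q b *ᵥ Sum.elim y 1 = 1 / 2 * (y ⬝ᵥ Q *ᵥ y) + q ⬝ᵥ y + b := by
  rw [conMat, smul_mulVec, dotProduct_smul, borderMat_quadForm_homogenize, smul_eq_mul]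
  ring

theorem objMat_quadForm_homogenize (Q : Matrix (Fin n) (Fin n) ℝ) (q : Fin n → ℝ) (b : ℝ) :
    Sum.elim y 1 ⬝ᵥ objMat Q q b *ᵥ Sum.elim y 1 = -(1 / 2) * (y ⬝ᵥ Q *ᵥ y) + q ⬝ᵥ y + b := by
  rw [objMat, smul_mulVec, dotProduct_smul, borderMat_quadForm_homogenize, smul_eq_mul,
    neg_mulVec, dotProduct_neg]
  ring

theorem one_quadForm_homogenize :
    Sum.elim y 1 ⬝ᵥ (1 : Matrix (Fin n ⊕ Unit) (Fin n ⊕ Unit) ℝ) *ᵥ Sum.elim y 1 =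
      y ⬝ᵥ y + 1 := by
  simp [dotProduct, Fintype.sum_sum_type]

theorem EMat_quadForm_homogenize : Sum.elim y 1 ⬝ᵥ EMat n *ᵥ Sum.elim y 1 = 1 := by
  simp [EMat, fromBlocks_mulVec, dotProduct, Fintype.sum_sum_type]

theorem sipr_quadForm_homogenize {r : ℕ} (Q : Matrix (Fin n) (Fin n) ℝ) (q : Fin n → ℝ) (b : ℝ)
    (Qc : Fin r → Matrix (Fin n) (Fin n) ℝ) (qc : Fin r → Fin n → ℝ) (bc : Fin r → ℝ)
    (lam : Fin r → ℝ) (al be : ℝ) :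
    Sum.elim y 1 ⬝ᵥ ((∑ j, lam j • conMat (Qc j) (qc j) (bc j)) + al • 1 + be • EMat n
        - objMat Q q b) *ᵥ Sum.elim y 1 =
      ∑ j, lam j * (1 / 2 * (y ⬝ᵥ Qc j *ᵥ y) + qc j ⬝ᵥ y + bc j) + al * (y ⬝ᵥ y + 1) + be
        - (-(1 / 2) * (y ⬝ᵥ Q *ᵥ y) + q ⬝ᵥ y + b) := by
  simp only [sub_mulVec, add_mulVec, sum_mulVec, smul_mulVec, dotProduct_sub, dotProduct_add,
    dotProduct_sum, dotProduct_smul, smul_eq_mul, conMat_quadForm_homogenize,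
    one_quadForm_homogenize, EMat_quadForm_homogenize, objMat_quadForm_homogenize, mul_one]

end Homogenization

theorem sipr_is_restriction_general {m n r : ℕ}
    (Q : EuclideanSpace ℝ (Fin m) → Matrix (Fin n) (Fin n) ℝ)
    (q : EuclideanSpace ℝ (Fin m) → Fin n → ℝ)
    (b : EuclideanSpace ℝ (Fin m) → ℝ)
    (Qc : Fin r → Matrix (Fin n) (Fin n) ℝ)
    (qc : Fin r → Fin n → ℝ) (bc : Fin r → ℝ)
    (ρ : ℝ)
    (hball : ∀ y : Fin n → ℝ,
      (∀ j, (1 / 2) * (y ⬝ᵥ Qc j *ᵥ y) + qc j ⬝ᵥ y + bc j ≤ 0) → y ⬝ᵥ y ≤ ρ ^ 2)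
    (x : EuclideanSpace ℝ (Fin m))
    (lam : Fin r → ℝ) (al be : ℝ)
    (hlam : ∀ j, 0 ≤ lam j) (hal : 0 ≤ al)
    (hfeas1 : al * (1 + ρ ^ 2) + be ≤ 0)
    (hfeas2 : ((∑ j, lam j • conMat (Qc j) (qc j) (bc j))
      + al • (1 : Matrix (Fin n ⊕ Unit) (Fin n ⊕ Unit) ℝ)
      + be • EMat n - objMat (Q x) (q x) (b x)).PosSemidef) :
    ∀ y : Fin n → ℝ,
      (∀ j, (1 / 2) * (y ⬝ᵥ Qc j *ᵥ y) + qc j ⬝ᵥ y + bc j ≤ 0) →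
      -(1 / 2) * (y ⬝ᵥ Q x *ᵥ y) + q x ⬝ᵥ y + b x ≤ 0 := by
  intro y hy
  have hpsd := hfeas2.dotProduct_mulVec_nonneg (Sum.elim y 1)
  rw [star_trivial, sipr_quadForm_homogenize] at hpsd
  have hcon : ∑ j, lam j * (1 / 2 * (y ⬝ᵥ Qc j *ᵥ y) + qc j ⬝ᵥ y + bc j) ≤ 0 :=
    Finset.sum_nonpos fun j _ => mul_nonpos_of_nonneg_of_nonpos (hlam j) (hy j)
  have hnorm : al * (y ⬝ᵥ y + 1) ≤ al * (1 + ρ ^ 2) :=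
    mul_le_mul_of_nonneg_left (by linarith [hball y hy]) hal
  linarith

/-- The finite SDP-based formulation SIPR is a restriction of the SIP problem:
any `x ∈ X` that is part of a feasible point `(x, λ, α, β)` of SIPR satisfies
`G(x,y) ≤ 0` for all `y ∈ Y`. -/
theorem sipr_is_restriction {m n r : ℕ}
    (Q : EuclideanSpace ℝ (Fin m) → Matrix (Fin n) (Fin n) ℝ) (hQlin : IsLinearMap ℝ Q)
    (hQsymm : ∀ x, (Q x).IsSymm)
    (q : EuclideanSpace ℝ (Fin m) → Fin n → ℝ) (hqlin : IsLinearMap ℝ q)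
    (b : EuclideanSpace ℝ (Fin m) → ℝ) (hblin : IsLinearMap ℝ b)
    (Qc : Fin r → Matrix (Fin n) (Fin n) ℝ) (hQc : ∀ j, (Qc j).IsSymm)
    (qc : Fin r → Fin n → ℝ) (bc : Fin r → ℝ)
    (ρ : ℝ) (hρ : 0 ≤ ρ)
    (hball : ∀ y : Fin n → ℝ,
      (∀ j, (1 / 2) * (y ⬝ᵥ Qc j *ᵥ y) + qc j ⬝ᵥ y + bc j ≤ 0) → y ⬝ᵥ y ≤ ρ ^ 2)
    (X : Set (EuclideanSpace ℝ (Fin m)))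
    (x : EuclideanSpace ℝ (Fin m)) (hx : x ∈ X)
    (lam : Fin r → ℝ) (al be : ℝ)
    (hlam : ∀ j, 0 ≤ lam j) (hal : 0 ≤ al)
    (hfeas1 : al * (1 + ρ ^ 2) + be ≤ 0)
    (hfeas2 : ((∑ j, lam j • conMat (Qc j) (qc j) (bc j))
      + al • (1 : Matrix (Fin n ⊕ Unit) (Fin n ⊕ Unit) ℝ)
      + be • EMat n - objMat (Q x) (q x) (b x)).PosSemidef) :
    ∀ y : Fin n → ℝ,
      (∀ j, (1 / 2) * (y ⬝ᵥ Qc j *ᵥ y) + qc j ⬝ᵥ y + bc j ≤ 0) →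
      -(1 / 2) * (y ⬝ᵥ Q x *ᵥ y) + q x ⬝ᵥ y + b x ≤ 0 :=
  sipr_is_restriction_general Q q b Qc qc bc ρ hball x lam al be hlam hal hfeas1 hfeas2
end
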